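/- Let K be a field, K̄ an algebraic closure, and G ≤ K̄^× with G^n ⊆ K^× where n is coprime to char(K). If μ_n(GK^×) = μ_n(K^×), then the exponentiation-by-n map induces an isomorphism GK^×/K^× ≅ G^n K^{×n}/K^{×n}. -/

import Mathlib

open Subgroup

noncomputable section

/-- The multiplicative group `K^×` viewed inside `K̄^×`. -/
def KX (K Kbar : Type*) [Field K] [Field Kbar] [Algebra K Kbar] : Subgroup Kbarˣ :=
  (Units.map (algebraMap K Kbar).toMonoidHom).range

variable (K : Type*) {Kbar : Type*} [Field K] [Field Kbar] [Algebra K Kbar]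

/-- The `n`-th power map `GK^× → G^n K^{×n}` on subgroups of `K̄^×`. -/
def powHom (G : Subgroup Kbarˣ) (n : ℕ) :
    ↥(G ⊔ KX K Kbar) →* ↥(G.map (powMonoidHom n) ⊔ (KX K Kbar).map (powMonoidHom n)) :=
  ((powMonoidHom n).domRestrict (G ⊔ KX K Kbar)).codRestrict _
    (fun a => by
      have h := Subgroup.mem_map_of_mem (powMonoidHom n) a.2
      rw [Subgroup.map_sup] at h
      exact h)

/-- The map `GK^×/K^× → G^n K^{×n}/K^{×n}` induced by raising to the `n`-th power. -/
def powQuotMap (G : Subgroup Kbarˣ) (n : ℕ) :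
    (↥(G ⊔ KX K Kbar) ⧸ ((KX K Kbar).subgroupOf (G ⊔ KX K Kbar))) →*
    (↥(G.map (powMonoidHom n) ⊔ (KX K Kbar).map (powMonoidHom n)) ⧸
      (((KX K Kbar).map (powMonoidHom n)).subgroupOf
        (G.map (powMonoidHom n) ⊔ (KX K Kbar).map (powMonoidHom n)))) :=
  QuotientGroup.map _ _ (powHom K G n)
    (fun a ha => by
      rw [Subgroup.mem_comap, Subgroup.mem_subgroupOf]
      exact Subgroup.mem_map_of_mem (powMonoidHom n) (Subgroup.mem_subgroupOf.mp ha))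

/-! The `n`-th power map sends `GK^×` onto `G^n K^{×n}`, so only injectivity modulo `K^×` is at
stake. If `z ∈ GK^×` and `z^n = k^n` with `k ∈ K^×`, then `z k⁻¹` is an `n`-th root of unity in
`GK^×`, hence lies in `K^×` by hypothesis, and so does `z`. -/

theorem QuotientGroup.map_bijective_of_surjective_of_comap_le {A B : Type*} [Group A] [Group B]
    {N : Subgroup A} [N.Normal] {M : Subgroup B} [M.Normal] {f : A →* B}
    (hf : Function.Surjective f) (h : N ≤ M.comap f) (hMN : M.comap f ≤ N) :
    Function.Bijective (QuotientGroup.map N M f h) := by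
  refine ⟨?_, QuotientGroup.map_surjective_of_surjective N M f
    (QuotientGroup.mk_surjective.comp hf) h⟩
  rw [← MonoidHom.ker_eq_bot_iff, QuotientGroup.ker_map, eq_bot_iff,
    ← QuotientGroup.map_mk'_self N]
  exact Subgroup.map_mono hMN

theorem Subgroup.mem_of_map_mem_map {A B : Type*} [Group A] [Group B] {f : A →* B}
    {H S : Subgroup A} (hHS : H ≤ S) (hker : f.ker ⊓ S ≤ H) {z : A} (hz : z ∈ S)
    (hfz : f z ∈ H.map f) : z ∈ H := by
  obtain ⟨h, hH, hfh⟩ := hfz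
  have hzh : z * h⁻¹ ∈ f.ker ⊓ S :=
    Subgroup.mem_inf.mpr ⟨by simp [hfh], mul_mem hz (inv_mem (hHS hH))⟩
  simpa using mul_mem (hker hzh) hH

theorem powHom_surjective (G : Subgroup Kbarˣ) (n : ℕ) :
    Function.Surjective (powHom K G n) := by
  rintro ⟨y, hy⟩
  rw [← Subgroup.map_sup] at hy
  obtain ⟨x, hx, rfl⟩ := hy
  exact ⟨⟨x, hx⟩, rfl⟩

theorem stmt2 (G : Subgroup Kbarˣ) (n : ℕ)
    (hmu : (powMonoidHom n).ker ⊓ (G ⊔ KX K Kbar) = (powMonoidHom n).ker ⊓ KX K Kbar) :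
    Function.Bijective (powQuotMap K G n) :=
  QuotientGroup.map_bijective_of_surjective_of_comap_le (powHom_surjective K G n) _
    fun x hx => Subgroup.mem_of_map_mem_map le_sup_right (hmu.le.trans inf_le_right) x.2 hx

end
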